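/- The hierarchical altruism equation φ(χ) = 2χ(1 − Φ(χ)) has exactly one real solution χ*; moreover χ* is positive and lies in the open interval (0, √3). -/

import Mathlib

open MeasureTheory

/-- The standard normal probability density function. -/
noncomputable def stdGaussianPDF (x : ℝ) : ℝ :=
  Real.exp (-x ^ 2 / 2) / Real.sqrt (2 * Real.pi)

/-- The standard normal cumulative distribution function. -/
noncomputable def stdGaussianCDF (x : ℝ) : ℝ :=
  ∫ t in Set.Iic x, stdGaussianPDF t

/-!
Since `φ > 0`, the equation says `G χ = 1/2` for `G x = x (1 - Φ x) / φ x`. From `φ' = -x φ` one gets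
`G' = ((1 + x²)(1 - Φ) - x φ) / φ`, which is positive by the Mills-type bound `x φ < (1 + x²)(1 - Φ)`:
the gap `x φ / (1 + x²) - (1 - Φ)` has derivative `2 φ / (1 + x²)² > 0` and tends to `0` at `+∞`, so it is
negative. Hence `G` is strictly increasing, `G 0 = 0`, and the bound at `x = 1` gives `G 1 > 1/2`; the
intermediate value theorem puts the unique solution in `(0, 1) ⊆ (0, √3)`.
-/

open Real Filter Set Topology ProbabilityTheory

theorem StrictMono.lt_of_tendsto_atTop {α β : Type*} [LinearOrder α] [NoMaxOrder α]
    [TopologicalSpace β] [Preorder β] [OrderClosedTopology β] {f : α → β} {l : β}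
    (hf : StrictMono f) (hl : Tendsto f atTop (𝓝 l)) (x : α) : f x < l := by
  obtain ⟨y, hxy⟩ := exists_gt x
  exact (hf hxy).trans_le (hf.monotone.ge_of_tendsto hl y)

theorem stdGaussianPDF_eq_gaussianPDFReal : stdGaussianPDF = gaussianPDFReal 0 1 := by
  ext x
  simp [stdGaussianPDF, gaussianPDFReal, div_eq_inv_mul]

theorem stdGaussianPDF_pos (x : ℝ) : 0 < stdGaussianPDF x := by
  rw [stdGaussianPDF_eq_gaussianPDFReal]
  exact gaussianPDFReal_pos 0 1 x one_ne_zero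

theorem integrable_stdGaussianPDF : Integrable stdGaussianPDF := by
  rw [stdGaussianPDF_eq_gaussianPDFReal]
  exact integrable_gaussianPDFReal 0 1

theorem integral_stdGaussianPDF : ∫ x, stdGaussianPDF x = 1 := by
  rw [stdGaussianPDF_eq_gaussianPDFReal]
  exact integral_gaussianPDFReal_eq_one 0 one_ne_zero

theorem continuous_stdGaussianPDF : Continuous stdGaussianPDF := by
  unfold stdGaussianPDF
  fun_prop

theorem hasDerivAt_stdGaussianPDF (x : ℝ) :
    HasDerivAt stdGaussianPDF (-x * stdGaussianPDF x) x := by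
  have h : HasDerivAt (fun x : ℝ => -x ^ 2 / 2) (-x) x :=
    ((hasDerivAt_pow 2 x).neg.div_const 2).congr_deriv (by simp; ring)
  refine (h.exp.div_const (√(2 * π))).congr_deriv ?_
  unfold stdGaussianPDF
  ring

theorem tendsto_stdGaussianPDF_atTop : Tendsto stdGaussianPDF atTop (𝓝 0) := by
  have h : Tendsto (fun x : ℝ => -x ^ 2 / 2) atTop atBot :=
    (tendsto_neg_atBot_iff.mpr (tendsto_pow_atTop two_ne_zero)).atBot_div_const two_pos
  unfold stdGaussianPDF
  simpa only [Function.comp_def, zero_div] using (tendsto_exp_atBot.comp h).div_const (√(2 * π))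

theorem hasDerivAt_stdGaussianCDF (x : ℝ) :
    HasDerivAt stdGaussianCDF (stdGaussianPDF x) x := by
  have hΦ : ∀ u, stdGaussianCDF u = (∫ t in (0 : ℝ)..u, stdGaussianPDF t) + stdGaussianCDF 0 := by
    intro u
    rw [← intervalIntegral.integral_Iic_sub_Iic integrable_stdGaussianPDF.integrableOn
      integrable_stdGaussianPDF.integrableOn, stdGaussianCDF, stdGaussianCDF, sub_add_cancel]
  rw [funext hΦ]
  exact (intervalIntegral.integral_hasDerivAt_right integrable_stdGaussianPDF.intervalIntegrable
    continuous_stdGaussianPDF.aestronglyMeasurable.stronglyMeasurableAtFilter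
    continuous_stdGaussianPDF.continuousAt).add_const _

theorem tendsto_stdGaussianCDF_atTop : Tendsto stdGaussianCDF atTop (𝓝 1) := by
  rw [← integral_stdGaussianPDF]
  exact (aecover_Iic tendsto_id).integral_tendsto_of_countably_generated integrable_stdGaussianPDF

theorem hasDerivAt_one_sub_stdGaussianCDF (x : ℝ) :
    HasDerivAt (fun x => 1 - stdGaussianCDF x) (-stdGaussianPDF x) x := by
  simpa using (hasDerivAt_stdGaussianCDF x).const_sub 1

theorem tendsto_mul_stdGaussianPDF_div_one_add_sq_atTop :
    Tendsto (fun x => x * stdGaussianPDF x / (1 + x ^ 2)) atTop (𝓝 0) := by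
  refine squeeze_zero' ?_ ?_ tendsto_stdGaussianPDF_atTop
  · filter_upwards [eventually_ge_atTop 0] with x hx
    have := stdGaussianPDF_pos x
    positivity
  · filter_upwards [eventually_ge_atTop 0] with x hx
    rw [div_le_iff₀ (by positivity)]
    nlinarith [stdGaussianPDF_pos x, sq_nonneg (x - 1)]

theorem mul_stdGaussianPDF_lt (x : ℝ) :
    x * stdGaussianPDF x < (1 + x ^ 2) * (1 - stdGaussianCDF x) := by
  set gap : ℝ → ℝ := fun x => x * stdGaussianPDF x / (1 + x ^ 2) - (1 - stdGaussianCDF x)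
  have hderiv (y : ℝ) : HasDerivAt gap (2 * stdGaussianPDF y / (1 + y ^ 2) ^ 2) y := by
    have hden : HasDerivAt (fun y : ℝ => 1 + y ^ 2) (2 * y) y := by
      simpa using (hasDerivAt_pow 2 y).const_add 1
    refine ((((hasDerivAt_id' y).mul (hasDerivAt_stdGaussianPDF y)).div hden
      (by positivity)).sub (hasDerivAt_one_sub_stdGaussianCDF y)).congr_deriv ?_
    simp only [Pi.mul_apply]
    field_simp
    ring
  have hmono : StrictMono gap := strictMono_of_hasDerivAt_pos hderiv fun y => by
    have := stdGaussianPDF_pos y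
    positivity
  have hlim : Tendsto gap atTop (𝓝 0) := by
    simpa using tendsto_mul_stdGaussianPDF_div_one_add_sq_atTop.sub
      (tendsto_stdGaussianCDF_atTop.const_sub 1)
  have hneg := hmono.lt_of_tendsto_atTop hlim x
  simp only [gap, sub_neg, div_lt_iff₀ (by positivity : (0 : ℝ) < 1 + x ^ 2)] at hneg
  linarith

noncomputable def scaledMillsRatio (x : ℝ) : ℝ :=
  x * (1 - stdGaussianCDF x) / stdGaussianPDF x

theorem hasDerivAt_scaledMillsRatio (x : ℝ) :
    HasDerivAt scaledMillsRatio
      (((1 + x ^ 2) * (1 - stdGaussianCDF x) - x * stdGaussianPDF x) / stdGaussianPDF x) x := by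
  have hpdf := (stdGaussianPDF_pos x).ne'
  refine (((hasDerivAt_id' x).mul (hasDerivAt_one_sub_stdGaussianCDF x)).div
    (hasDerivAt_stdGaussianPDF x) hpdf).congr_deriv ?_
  simp only [Pi.mul_apply]
  field_simp
  ring

theorem strictMono_scaledMillsRatio : StrictMono scaledMillsRatio :=
  strictMono_of_hasDerivAt_pos hasDerivAt_scaledMillsRatio fun x =>
    div_pos (sub_pos.2 (mul_stdGaussianPDF_lt x)) (stdGaussianPDF_pos x)

theorem continuous_scaledMillsRatio : Continuous scaledMillsRatio :=
  continuous_iff_continuousAt.2 fun x => (hasDerivAt_scaledMillsRatio x).continuousAt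

theorem stdGaussianPDF_eq_iff_scaledMillsRatio_eq_half (x : ℝ) :
    stdGaussianPDF x = 2 * x * (1 - stdGaussianCDF x) ↔ scaledMillsRatio x = 1 / 2 := by
  rw [scaledMillsRatio, div_eq_iff (stdGaussianPDF_pos x).ne']
  constructor <;> intro h <;> linarith

theorem half_lt_scaledMillsRatio_one : 1 / 2 < scaledMillsRatio 1 := by
  have h := mul_stdGaussianPDF_lt 1
  rw [scaledMillsRatio, lt_div_iff₀ (stdGaussianPDF_pos 1)]
  norm_num at h ⊢
  linarith

/-- The hierarchical altruism equation `φ(χ) = 2χ(1 − Φ(χ))` has exactly one real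
solution `χ*`; moreover `χ*` is positive and lies in the open interval `(0, √3)`. -/
theorem hierarchical_altruism_equation_unique_solution :
    ∃ χs : ℝ, stdGaussianPDF χs = 2 * χs * (1 - stdGaussianCDF χs) ∧
      0 < χs ∧ χs < Real.sqrt 3 ∧
      ∀ χ : ℝ, stdGaussianPDF χ = 2 * χ * (1 - stdGaussianCDF χ) → χ = χs := by
  have hhalf : (1 / 2 : ℝ) ∈ Ioo (scaledMillsRatio 0) (scaledMillsRatio 1) :=
    ⟨by simp [scaledMillsRatio], half_lt_scaledMillsRatio_one⟩
  obtain ⟨χs, ⟨hpos, hlt_one⟩, hχs⟩ :=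
    intermediate_value_Ioo zero_le_one continuous_scaledMillsRatio.continuousOn hhalf
  refine ⟨χs, (stdGaussianPDF_eq_iff_scaledMillsRatio_eq_half χs).2 hχs, hpos,
    hlt_one.trans ((lt_sqrt zero_le_one).2 (by norm_num)), fun χ hχ => ?_⟩
  exact strictMono_scaledMillsRatio.injective
    (((stdGaussianPDF_eq_iff_scaledMillsRatio_eq_half χ).1 hχ).trans hχs.symm)
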